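/- arXiv:1709.01248 — 2 statements merged into one kernel-verified Lean document; each statement's English description precedes it below -/
import Mathlib

section
/- For all n, the number of 132-avoiding permutations of length n equals the n-th Catalan number C_n = (2n)! / (n!(n+1)!). -/
def Contains132 {m : ℕ} (f : Fin m → Fin m) : Prop :=
  ∃ i j k : Fin m, i < j ∧ j < k ∧ f i < f k ∧ f k < f j

instance {m : ℕ} (f : Fin m → Fin m) : Decidable (Contains132 f) := by
  unfold Contains132; infer_instance

abbrev Av (m : ℕ) := {π : Equiv.Perm (Fin m) // ¬ Contains132 (π : Fin m → Fin m)}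

noncomputable def A (m : ℕ) : ℕ := Nat.card (Av m)

example (m : ℕ) : Fintype (Av m) := by infer_instance

theorem A_zero : A 0 = 1 := by
  have h : ∀ π : Equiv.Perm (Fin 0), ¬ Contains132 (π : Fin 0 → Fin 0) := by
    rintro π ⟨i, -⟩; exact i.elim0
  rw [A, Nat.card_congr (Equiv.subtypeUnivEquiv h)]
  simp [Nat.card_eq_fintype_card]

section Build
variable {n p : ℕ}

def build (hp : p ≤ n) (σ : Equiv.Perm (Fin p)) (τ : Equiv.Perm (Fin (n - p)))
    (i : Fin (n + 1)) : Fin (n + 1) :=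
  if h : (i : ℕ) < p then ⟨(σ ⟨i, h⟩ : ℕ) + (n - p), by have := (σ ⟨i, h⟩).isLt; omega⟩
  else if h2 : (i : ℕ) = p then ⟨n, by omega⟩
  else ⟨(τ ⟨(i : ℕ) - p - 1, by have := i.isLt; omega⟩ : ℕ), by
    have := (τ ⟨(i : ℕ) - p - 1, by have := i.isLt; omega⟩).isLt; omega⟩

variable (hp : p ≤ n) (σ : Equiv.Perm (Fin p)) (τ : Equiv.Perm (Fin (n - p)))

theorem build_lt {i : Fin (n+1)} (h : (i : ℕ) < p) :
    (build hp σ τ i : ℕ) = (σ ⟨i, h⟩ : ℕ) + (n - p) := by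
  simp [build, h]

theorem build_eq {i : Fin (n+1)} (h : (i : ℕ) = p) : (build hp σ τ i : ℕ) = n := by
  simp [build, h]

theorem build_gt {i : Fin (n+1)} (h : p < (i : ℕ)) :
    (build hp σ τ i : ℕ) = (τ ⟨(i : ℕ) - p - 1, by have := i.isLt; omega⟩ : ℕ) := by
  have h1 : ¬ ((i : ℕ) < p) := by omega
  have h2 : ¬ ((i : ℕ) = p) := by omega
  simp [build, h1, h2]

theorem build_injective : Function.Injective (build hp σ τ) := by
  intro i j hij
  have hij' : (build hp σ τ i : ℕ) = (build hp σ τ j : ℕ) := by rw [hij]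
  rcases lt_trichotomy (i : ℕ) p with hi | hi | hi <;>
    rcases lt_trichotomy (j : ℕ) p with hj | hj | hj
  · rw [build_lt hp σ τ hi, build_lt hp σ τ hj] at hij'
    have : σ ⟨i, hi⟩ = σ ⟨j, hj⟩ := by
      apply Fin.ext; omega
    have := σ.injective this
    exact Fin.ext (by simpa [Fin.mk.injEq] using this)
  · rw [build_lt hp σ τ hi, build_eq hp σ τ hj] at hij'
    have := (σ ⟨i, hi⟩).isLt; omega
  · rw [build_lt hp σ τ hi, build_gt hp σ τ hj] at hij'
    have := (σ ⟨i, hi⟩).isLt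
    have := (τ ⟨(j : ℕ) - p - 1, by have := j.isLt; omega⟩).isLt; omega
  · rw [build_eq hp σ τ hi, build_lt hp σ τ hj] at hij'
    have := (σ ⟨j, hj⟩).isLt; omega
  · exact Fin.ext (by omega)
  · rw [build_eq hp σ τ hi, build_gt hp σ τ hj] at hij'
    have := (τ ⟨(j : ℕ) - p - 1, by have := j.isLt; omega⟩).isLt; omega
  · rw [build_gt hp σ τ hi, build_lt hp σ τ hj] at hij'
    have := (σ ⟨j, hj⟩).isLt
    have := (τ ⟨(i : ℕ) - p - 1, by have := i.isLt; omega⟩).isLt; omega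
  · rw [build_gt hp σ τ hi, build_eq hp σ τ hj] at hij'
    have := (τ ⟨(i : ℕ) - p - 1, by have := i.isLt; omega⟩).isLt; omega
  · rw [build_gt hp σ τ hi, build_gt hp σ τ hj] at hij'
    have : τ ⟨(i : ℕ) - p - 1, by have := i.isLt; omega⟩
        = τ ⟨(j : ℕ) - p - 1, by have := j.isLt; omega⟩ := Fin.ext hij'
    have := τ.injective this
    simp only [Fin.mk.injEq] at this
    exact Fin.ext (by omega)

noncomputable def buildPerm : Equiv.Perm (Fin (n + 1)) :=
  Equiv.ofBijective _ (Finite.injective_iff_bijective.mp (build_injective hp σ τ))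

@[simp] theorem buildPerm_apply (i : Fin (n + 1)) : buildPerm hp σ τ i = build hp σ τ i := rfl

end Build

theorem build_avoid {n p : ℕ} (hp : p ≤ n) (σ : Equiv.Perm (Fin p)) (τ : Equiv.Perm (Fin (n - p)))
    (hσ : ¬ Contains132 (σ : Fin p → Fin p)) (hτ : ¬ Contains132 (τ : Fin (n-p) → Fin (n-p))) :
    ¬ Contains132 (build hp σ τ) := by
  rintro ⟨i, j, k, hij, hjk, h1, h2⟩
  have hij' : (i : ℕ) < (j : ℕ) := hij
  have hjk' : (j : ℕ) < (k : ℕ) := hjk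
  have h1' : (build hp σ τ i : ℕ) < (build hp σ τ k : ℕ) := h1
  have h2' : (build hp σ τ k : ℕ) < (build hp σ τ j : ℕ) := h2
  rcases lt_trichotomy (k : ℕ) p with hk | hk | hk
  · -- all three in left block: pattern in σ
    have hi : (i : ℕ) < p := by omega
    have hj : (j : ℕ) < p := by omega
    rw [build_lt hp σ τ hi, build_lt hp σ τ hk] at h1'
    rw [build_lt hp σ τ hk, build_lt hp σ τ hj] at h2'
    exact hσ ⟨⟨i, hi⟩, ⟨j, hj⟩, ⟨k, hk⟩, hij', hjk', by omega, by omega⟩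
  · -- k = p : value n, but build j > build k ≤ n impossible
    rw [build_eq hp σ τ hk] at h2'
    have := (build hp σ τ j).isLt; omega
  · rcases lt_trichotomy (i : ℕ) p with hi | hi | hi
    · -- i left, k right : build i ≥ n - p > build k, contradiction with h1'
      rw [build_lt hp σ τ hi, build_gt hp σ τ hk] at h1'
      have := (τ ⟨(k : ℕ) - p - 1, by have := k.isLt; omega⟩).isLt; omega
    · -- i = p : build i = n, build i < build k impossible
      rw [build_eq hp σ τ hi] at h1'
      have := (build hp σ τ k).isLt; omega
    · -- all right : pattern in τ
      have hj : p < (j : ℕ) := by omega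
      rw [build_gt hp σ τ hi, build_gt hp σ τ hk] at h1'
      rw [build_gt hp σ τ hk, build_gt hp σ τ hj] at h2'
      exact hτ ⟨⟨(i : ℕ) - p - 1, by have := i.isLt; omega⟩,
        ⟨(j : ℕ) - p - 1, by have := j.isLt; omega⟩,
        ⟨(k : ℕ) - p - 1, by have := k.isLt; omega⟩,
        by simp only [Fin.mk_lt_mk]; omega, by simp only [Fin.mk_lt_mk]; omega,
        h1', h2'⟩

section Decomp
variable {n : ℕ} (π : Equiv.Perm (Fin (n + 1)))

/-- position of the max -/
noncomputable def maxPos : Fin (n + 1) := π.symm (Fin.last n)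

theorem maxPos_apply : π (maxPos π) = Fin.last n := π.apply_symm_apply _

theorem apply_ne_last {k : Fin (n + 1)} (hk : k ≠ maxPos π) : (π k : ℕ) < n := by
  have h : π k ≠ Fin.last n := fun h => hk (by
    have := congrArg π.symm h; simpa [maxPos] using this)
  have := (π k).isLt
  have : (π k : ℕ) ≠ n := fun hv => h (Fin.ext (by simpa using hv))
  omega

theorem left_gt_right (hπ : ¬ Contains132 (π : Fin (n+1) → Fin (n+1))) {i k : Fin (n + 1)} (hi : (i : ℕ) < (maxPos π : ℕ))
    (hk : ((maxPos π : ℕ)) < (k : ℕ)) : (π k : ℕ) < (π i : ℕ) := by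
  by_contra hcon
  have hik : i ≠ k := fun h => by omega
  have hne : (π i : ℕ) ≠ (π k : ℕ) := fun h => hik (π.injective (Fin.ext h))
  have h1 : (π i : ℕ) < (π k : ℕ) := by omega
  have h2 : (π k : ℕ) < n := apply_ne_last π (fun h => by omega)
  refine hπ ⟨i, maxPos π, k, hi, hk, h1, ?_⟩
  have := maxPos_apply π
  rw [this]
  exact h2.trans_le (by simp [Fin.last, Fin.le_def])

theorem left_ge (hπ : ¬ Contains132 (π : Fin (n+1) → Fin (n+1))) {i : Fin (n + 1)} (hi : (i : ℕ) < (maxPos π : ℕ)) :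
    n - (maxPos π : ℕ) ≤ (π i : ℕ) := by
  have key := Finset.card_le_card_of_injOn (f := π) (s := Finset.Ioi (maxPos π))
    (t := Finset.Iio (π i))
    (fun k hk => by
      simp only [Finset.mem_coe, Finset.mem_Ioi] at hk
      simp only [Finset.mem_coe, Finset.mem_Iio]
      exact Fin.lt_def.mpr (left_gt_right π hπ hi (Fin.lt_def.mp hk)))
    (fun a _ b _ h => π.injective h)
  rw [Fin.card_Ioi, Fin.card_Iio] at key
  omega

theorem right_lt (hπ : ¬ Contains132 (π : Fin (n+1) → Fin (n+1))) {k : Fin (n + 1)} (hk : ((maxPos π : ℕ)) < (k : ℕ)) :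
    (π k : ℕ) < n - (maxPos π : ℕ) := by
  have key := Finset.card_le_card_of_injOn (f := π) (s := Finset.Iic (maxPos π))
    (t := Finset.Ioi (π k))
    (fun j hj => by
      simp only [Finset.mem_coe, Finset.mem_Iic] at hj
      simp only [Finset.mem_coe, Finset.mem_Ioi]
      rcases eq_or_lt_of_le hj with h | h
      · have hk' : (π k : ℕ) < n := apply_ne_last π (fun hh => by omega)
        have : π j = Fin.last n := h ▸ maxPos_apply π
        rw [Fin.lt_def, this]
        simpa using hk'
      · exact Fin.lt_def.mpr (left_gt_right π hπ (Fin.lt_def.mp h) hk))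
    (fun a _ b _ h => π.injective h)
  rw [Fin.card_Iic, Fin.card_Ioi] at key
  have := (maxPos π).isLt
  omega


theorem maxPos_le : ((maxPos π : ℕ)) ≤ n := by have := (maxPos π).isLt; omega

noncomputable def leftFun (hπ : ¬ Contains132 (π : Fin (n+1) → Fin (n+1))) :
    Fin (maxPos π : ℕ) → Fin (maxPos π : ℕ) := fun i =>
  ⟨(π ⟨i, i.isLt.trans (maxPos π).isLt⟩ : ℕ) - (n - (maxPos π : ℕ)), by
    have h1 := left_ge π hπ (i := ⟨i, i.isLt.trans (maxPos π).isLt⟩) (by simpa using i.isLt)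
    have h2 : (π ⟨i, i.isLt.trans (maxPos π).isLt⟩ : ℕ) < n :=
      apply_ne_last π (fun hh => by
        have : (i : ℕ) = (maxPos π : ℕ) := congrArg Fin.val hh
        have := i.isLt; omega)
    have := maxPos_le π
    omega⟩

theorem leftFun_injective (hπ : ¬ Contains132 (π : Fin (n+1) → Fin (n+1))) :
    Function.Injective (leftFun π hπ) := by
  intro i j h
  simp only [leftFun, Fin.mk.injEq] at h
  have h1 := left_ge π hπ (i := ⟨i, i.isLt.trans (maxPos π).isLt⟩) (by simpa using i.isLt)
  have h2 := left_ge π hπ (i := ⟨j, j.isLt.trans (maxPos π).isLt⟩) (by simpa using j.isLt)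
  have hval : (π ⟨i, i.isLt.trans (maxPos π).isLt⟩ : ℕ) = (π ⟨j, j.isLt.trans (maxPos π).isLt⟩ : ℕ) := by omega
  have := π.injective (Fin.ext hval)
  simp only [Fin.mk.injEq] at this
  exact Fin.ext this

noncomputable def leftPerm (hπ : ¬ Contains132 (π : Fin (n+1) → Fin (n+1))) :
    Equiv.Perm (Fin (maxPos π : ℕ)) :=
  Equiv.ofBijective _ (Finite.injective_iff_bijective.mp (leftFun_injective π hπ))

theorem leftPerm_avoid (hπ : ¬ Contains132 (π : Fin (n+1) → Fin (n+1))) :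
    ¬ Contains132 ((leftPerm π hπ : Equiv.Perm (Fin (maxPos π : ℕ))) :
      Fin (maxPos π : ℕ) → Fin (maxPos π : ℕ)) := by
  rintro ⟨i, j, k, hij, hjk, h1, h2⟩
  have e : ∀ a : Fin (maxPos π : ℕ), ((leftPerm π hπ a : ℕ)) =
      (π ⟨a, a.isLt.trans (maxPos π).isLt⟩ : ℕ) - (n - (maxPos π : ℕ)) := fun a => rfl
  have ge : ∀ a : Fin (maxPos π : ℕ), n - (maxPos π : ℕ) ≤ (π ⟨a, a.isLt.trans (maxPos π).isLt⟩ : ℕ) :=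
    fun a => left_ge π hπ (by simpa using a.isLt)
  refine hπ ⟨⟨i, i.isLt.trans (maxPos π).isLt⟩, ⟨j, j.isLt.trans (maxPos π).isLt⟩,
    ⟨k, k.isLt.trans (maxPos π).isLt⟩, by simpa using hij, by simpa using hjk, ?_, ?_⟩ <;>
    rw [Fin.lt_def]
  · have := h1; rw [Fin.lt_def, e i, e k] at this
    have := ge i; have := ge k; omega
  · have := h2; rw [Fin.lt_def, e k, e j] at this
    have := ge k; have := ge j; omega

noncomputable def rightFun (hπ : ¬ Contains132 (π : Fin (n+1) → Fin (n+1))) :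
    Fin (n - (maxPos π : ℕ)) → Fin (n - (maxPos π : ℕ))  := fun k =>
  ⟨(π ⟨(maxPos π : ℕ) + 1 + k, by have := k.isLt; have := maxPos_le π; omega⟩ : ℕ), by
    exact right_lt π hπ (by simp; omega)⟩

theorem rightFun_injective (hπ : ¬ Contains132 (π : Fin (n+1) → Fin (n+1))) :
    Function.Injective (rightFun π hπ) := by
  intro i j h
  simp only [rightFun, Fin.mk.injEq] at h
  have := π.injective (Fin.ext h)
  simp only [Fin.mk.injEq] at this
  exact Fin.ext (by omega)

noncomputable def rightPerm (hπ : ¬ Contains132 (π : Fin (n+1) → Fin (n+1))) :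
    Equiv.Perm (Fin (n - (maxPos π : ℕ))) :=
  Equiv.ofBijective _ (Finite.injective_iff_bijective.mp (rightFun_injective π hπ))

theorem rightPerm_avoid (hπ : ¬ Contains132 (π : Fin (n+1) → Fin (n+1))) :
    ¬ Contains132 ((rightPerm π hπ : Equiv.Perm (Fin (n - (maxPos π : ℕ)))) :
      Fin (n - (maxPos π : ℕ)) → Fin (n - (maxPos π : ℕ))) := by
  rintro ⟨i, j, k, hij, hjk, h1, h2⟩
  have hb : ∀ a : Fin (n - (maxPos π : ℕ)), (maxPos π : ℕ) + 1 + (a : ℕ) < n + 1 := by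
    intro a; have := a.isLt; have := maxPos_le π; omega
  refine hπ ⟨⟨(maxPos π : ℕ) + 1 + i, hb i⟩, ⟨(maxPos π : ℕ) + 1 + j, hb j⟩,
    ⟨(maxPos π : ℕ) + 1 + k, hb k⟩, ?_, ?_, h1, h2⟩
  · simp only [Fin.mk_lt_mk]; have := Fin.lt_def.mp hij; omega
  · simp only [Fin.mk_lt_mk]; have := Fin.lt_def.mp hjk; omega

end Decomp

section Main
variable {n : ℕ}

noncomputable def G (n : ℕ) (x : Σ p : Fin (n + 1), Av (p : ℕ) × Av (n - (p : ℕ))) :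
    Av (n + 1) :=
  ⟨buildPerm (Nat.lt_succ_iff.mp x.1.isLt) x.2.1.1 x.2.2.1,
    build_avoid (Nat.lt_succ_iff.mp x.1.isLt) _ _ x.2.1.2 x.2.2.2⟩

theorem G_injective (n : ℕ) : Function.Injective (G n) := by
  rintro ⟨⟨p, hp'⟩, ⟨σ, hσ⟩, ⟨τ, hτ⟩⟩ ⟨⟨q, hq'⟩, ⟨σ', hσ'⟩, ⟨τ', hτ'⟩⟩ h
  have hp : p ≤ n := Nat.lt_succ_iff.mp hp'
  have hq : q ≤ n := Nat.lt_succ_iff.mp hq'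
  have hfun : ∀ i : Fin (n + 1), build hp σ τ i = build hq σ' τ' i := by
    intro i
    have := congrArg (fun z : Av (n+1) => (z.1 : Equiv.Perm (Fin (n+1))) i) h
    simpa [G, buildPerm] using this
  -- p = q
  have hpq : p = q := by
    by_contra hne
    have h1 := congrArg Fin.val (hfun ⟨p, hp'⟩)
    rw [build_eq hp σ τ rfl] at h1
    rcases lt_or_gt_of_ne hne with hlt | hgt
    · rw [build_lt hq σ' τ' hlt] at h1
      have := (σ' ⟨p, hlt⟩).isLt; omega
    · rw [build_gt hq σ' τ' hgt] at h1
      have := (τ' ⟨p - q - 1, by omega⟩).isLt; omega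
  subst hpq
  have hστ : σ = σ' := by
    apply Equiv.ext; intro i
    have h1 := congrArg Fin.val (hfun ⟨i, i.isLt.trans hp'⟩)
    rw [build_lt hp σ τ i.isLt, build_lt hp σ' τ' i.isLt] at h1
    exact Fin.ext (by simpa using h1)
  have hττ : τ = τ' := by
    apply Equiv.ext; intro k
    have hkl : (k : ℕ) < n - p := k.isLt
    have hk : p < p + 1 + (k : ℕ) := by omega
    have hk' : p + 1 + (k : ℕ) < n + 1 := by omega
    have h1 := congrArg Fin.val (hfun ⟨p + 1 + (k : ℕ), hk'⟩)
    rw [build_gt hp σ τ hk, build_gt hp σ' τ' hk] at h1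
    have hkk : (⟨p + 1 + (k : ℕ) - p - 1, by omega⟩ : Fin (n - p)) = k :=
      Fin.ext (by simp; omega)
    rw [hkk] at h1
    exact Fin.ext h1
  subst hστ; subst hττ; rfl

theorem G_surjective (n : ℕ) : Function.Surjective (G n) := by
  rintro ⟨π, hπ⟩
  refine ⟨⟨maxPos π, ⟨leftPerm π hπ, leftPerm_avoid π hπ⟩, ⟨rightPerm π hπ, rightPerm_avoid π hπ⟩⟩, ?_⟩
  have hp : (maxPos π : ℕ) ≤ n := maxPos_le π
  set p : ℕ := (maxPos π : ℕ) with hpdef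
  have key : ∀ i : Fin (n + 1),
      (build hp (leftPerm π hπ) (rightPerm π hπ) i : ℕ) = (π i : ℕ) := by
    intro i
    rcases lt_trichotomy (i : ℕ) p with hi | hi | hi
    · rw [build_lt hp _ _ hi]
      have hival : (⟨((⟨(i : ℕ), hi⟩ : Fin p) : ℕ), by omega⟩ : Fin (n + 1)) = i := Fin.ext rfl
      have : ((leftPerm π hπ ⟨(i : ℕ), hi⟩ : ℕ)) = (π i : ℕ) - (n - p) := by
        show ((leftFun π hπ ⟨(i : ℕ), hi⟩ : ℕ)) = (π i : ℕ) - (n - p)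
        simp only [leftFun]
        rfl
      rw [this]
      have hge := left_ge π hπ (i := i) hi
      omega
    · rw [build_eq hp _ _ hi]
      have : i = maxPos π := Fin.ext hi
      rw [this, maxPos_apply π]
      simp
    · rw [build_gt hp _ _ hi]
      have hpos : (⟨p + 1 + ((⟨(i : ℕ) - p - 1, by have := i.isLt; omega⟩ : Fin (n - p)) : ℕ), by
          have := i.isLt; simp; omega⟩ : Fin (n + 1)) = i := Fin.ext (by simp; omega)
      show ((rightFun π hπ ⟨(i : ℕ) - p - 1, by have := i.isLt; omega⟩ : ℕ)) = (π i : ℕ)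
      simp only [rightFun]
      rw [hpos]
  exact Subtype.ext (Equiv.ext fun i => Fin.ext (key i))

theorem A_succ (n : ℕ) : A (n + 1) = ∑ i : Fin (n + 1), A i * A (n - (i : ℕ)) := by
  have e : Av (n + 1) ≃ Σ p : Fin (n + 1), Av (p : ℕ) × Av (n - (p : ℕ)) :=
    (Equiv.ofBijective (G n) ⟨G_injective n, G_surjective n⟩).symm
  rw [A, Nat.card_congr e, Nat.card_eq_fintype_card, Fintype.card_sigma]
  congr 1
  funext p
  rw [Fintype.card_prod, A, A, Nat.card_eq_fintype_card, Nat.card_eq_fintype_card]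

theorem A_eq_catalan : ∀ n, A n = catalan n := by
  intro n
  induction n using Nat.strong_induction_on with
  | _ n ih =>
    match n with
    | 0 => rw [A_zero, catalan_zero]
    | m + 1 =>
      rw [A_succ, catalan_succ]
      refine Finset.sum_congr rfl fun i _ => ?_
      rw [ih i (by have := i.isLt; omega), ih (m - (i : ℕ)) (by omega)]

end Main

theorem catalan_eq_div (n : ℕ) :
    catalan n = (2 * n).factorial / (n.factorial * (n + 1).factorial) := by
  have h : n ≤ 2 * n := by omega
  have h2 := Nat.choose_mul_factorial_mul_factorial h
  have h3 : 2 * n - n = n := by omega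
  rw [h3] at h2
  have h4 : (2 * n).choose n = (n + 1) * catalan n := by
    have := succ_mul_catalan_eq_centralBinom n
    rw [Nat.centralBinom] at this
    omega
  have h5 : (2 * n).factorial = catalan n * (n.factorial * ((n + 1) * n.factorial)) := by
    rw [← h2, h4]; ring
  rw [Nat.factorial_succ, h5, Nat.mul_div_cancel]
  positivity

theorem card_av132_eq_catalan (n : ℕ) :
    Nat.card {π : Equiv.Perm (Fin n) // ¬ Contains132 (π : Fin n → Fin n)} =
      (2 * n).factorial / (n.factorial * (n + 1).factorial) := by
  rw [← catalan_eq_div]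
  exact A_eq_catalan n
end

section
/- If σ = 1/2 and b_n = B μ^n μ₁^{√n} n^g (B, μ, μ₁ > 0, g real), then the second-order ratio asymptotics hold: n·(b_n/(μ b_{n−1}) − 1 − (log μ₁)/(2√n)) → g + (log² μ₁)/8 as n → ∞. -/
open Filter Real

private lemma aux_inv_sqrt_tendsto :
    Tendsto (fun n : ℕ => 1 / Real.sqrt n) atTop (nhds 0) := by
  have h1 : Tendsto (fun n : ℕ => ((n : ℝ))⁻¹) atTop (nhds 0) :=
    tendsto_inv_atTop_zero.comp tendsto_natCast_atTop_atTop
  have h2 : Tendsto (fun n : ℕ => Real.sqrt ((n : ℝ)⁻¹)) atTop (nhds (Real.sqrt 0)) :=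
    (Real.continuous_sqrt.tendsto 0).comp h1
  rw [Real.sqrt_zero] at h2
  refine h2.congr fun n => ?_
  rw [Real.sqrt_inv, one_div]

/-- `(n-1)/n → 1` -/
private lemma aux_ratio_tendsto :
    Tendsto (fun n : ℕ => ((n : ℝ) - 1) / n) atTop (nhds 1) := by
  have h := tendsto_one_div_atTop_nhds_zero_nat (𝕜 := ℝ)
  have h2 : Tendsto (fun n : ℕ => 1 - 1 / (n : ℝ)) atTop (nhds (1 - 0)) :=
    tendsto_const_nhds.sub h
  rw [sub_zero] at h2
  refine h2.congr' ?_
  filter_upwards [eventually_ge_atTop 1] with n hn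
  have hn0 : (n : ℝ) ≠ 0 := by positivity
  field_simp

/-- `√(n-1)/√n → 1` -/
private lemma aux_sqrt_ratio_tendsto :
    Tendsto (fun n : ℕ => Real.sqrt ((n : ℝ) - 1) / Real.sqrt n) atTop (nhds 1) := by
  have h : Tendsto (fun n : ℕ => Real.sqrt (((n:ℝ) - 1) / n)) atTop (nhds (Real.sqrt 1)) :=
    (Real.continuous_sqrt.tendsto 1).comp aux_ratio_tendsto
  rw [Real.sqrt_one] at h
  refine h.congr' ?_
  filter_upwards [eventually_ge_atTop 1] with n hn
  have h0 : (0:ℝ) ≤ (n : ℝ) - 1 := by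
    have : (1:ℝ) ≤ n := by exact_mod_cast hn
    linarith
  rw [Real.sqrt_div h0]

/-- `q n = √n/(√n + √(n-1)) → 1/2` -/
private lemma aux_q_tendsto :
    Tendsto (fun n : ℕ => Real.sqrt n / (Real.sqrt n + Real.sqrt ((n : ℝ) - 1)))
      atTop (nhds (1/2)) := by
  have h : Tendsto (fun n : ℕ => 1 / (1 + Real.sqrt ((n:ℝ) - 1) / Real.sqrt n))
      atTop (nhds (1 / (1 + 1))) := by
    refine Tendsto.div tendsto_const_nhds (tendsto_const_nhds.add aux_sqrt_ratio_tendsto) ?_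
    norm_num
  have he : (1:ℝ) / (1 + 1) = 1/2 := by norm_num
  rw [he] at h
  refine h.congr' ?_
  filter_upwards [eventually_ge_atTop 1] with n hn
  have hs : 0 < Real.sqrt n := Real.sqrt_pos.mpr (by exact_mod_cast Nat.pos_of_ne_zero (by omega))
  have h0 : (0:ℝ) ≤ (n : ℝ) - 1 := by
    have : (1:ℝ) ≤ n := by exact_mod_cast hn
    linarith
  have hw : 0 ≤ Real.sqrt ((n:ℝ) - 1) := Real.sqrt_nonneg _
  have hsum : 0 < Real.sqrt n + Real.sqrt ((n:ℝ) - 1) := by positivity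
  rw [one_add_div hs.ne', one_div_div]

/-- key algebraic identity `√n - √(n-1) = 1/(√n + √(n-1))` for `n ≥ 1` -/
private lemma aux_delta_eq (n : ℕ) (hn : 1 ≤ n) :
    Real.sqrt n - Real.sqrt ((n : ℝ) - 1) =
      1 / (Real.sqrt n + Real.sqrt ((n : ℝ) - 1)) := by
  have hn1 : (1:ℝ) ≤ (n:ℝ) := by exact_mod_cast hn
  have h0 : (0:ℝ) ≤ (n : ℝ) - 1 := by linarith
  have hs : 0 < Real.sqrt n := Real.sqrt_pos.mpr (by linarith)
  have hsum : 0 < Real.sqrt n + Real.sqrt ((n:ℝ) - 1) := by positivity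
  rw [eq_div_iff (ne_of_gt hsum)]
  have e1 : Real.sqrt n * Real.sqrt n = (n:ℝ) := Real.mul_self_sqrt (by linarith)
  have e2 : Real.sqrt ((n:ℝ)-1) * Real.sqrt ((n:ℝ)-1) = (n:ℝ) - 1 :=
    Real.mul_self_sqrt h0
  nlinarith [e1, e2]

/-- `√n * (√n - √(n-1)) → 1/2` -/
private lemma aux_sqrt_delta_tendsto :
    Tendsto (fun n : ℕ => Real.sqrt n * (Real.sqrt n - Real.sqrt ((n : ℝ) - 1)))
      atTop (nhds (1/2)) := by
  refine aux_q_tendsto.congr' ?_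
  filter_upwards [eventually_ge_atTop 1] with n hn
  rw [aux_delta_eq n hn]
  ring

/-- `n * (√n - √(n-1) - 1/(2√n)) → 0` -/
private lemma aux_delta_err_tendsto :
    Tendsto (fun n : ℕ =>
        (n:ℝ) * (Real.sqrt n - Real.sqrt ((n : ℝ) - 1) - 1 / (2 * Real.sqrt n)))
      atTop (nhds 0) := by
  have h : Tendsto (fun n : ℕ =>
      (Real.sqrt n / (Real.sqrt n + Real.sqrt ((n:ℝ) - 1)))^2 * (1 / Real.sqrt n) * (1/2))
      atTop (nhds ((1/2)^2 * 0 * (1/2))) :=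
    ((aux_q_tendsto.pow 2).mul aux_inv_sqrt_tendsto).mul tendsto_const_nhds
  have he : ((1:ℝ)/2)^2 * 0 * (1/2) = 0 := by ring
  rw [he] at h
  refine h.congr' ?_
  filter_upwards [eventually_ge_atTop 1] with n hn
  have hn1 : (1:ℝ) ≤ (n:ℝ) := by exact_mod_cast hn
  have h0 : (0:ℝ) ≤ (n : ℝ) - 1 := by linarith
  have hs : 0 < Real.sqrt n := Real.sqrt_pos.mpr (by linarith)
  have hsum : 0 < Real.sqrt n + Real.sqrt ((n:ℝ) - 1) := by positivity
  have e1 : Real.sqrt n * Real.sqrt n = (n:ℝ) := Real.mul_self_sqrt (by linarith)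
  have e2 : Real.sqrt ((n:ℝ)-1) * Real.sqrt ((n:ℝ)-1) = (n:ℝ) - 1 :=
    Real.mul_self_sqrt h0
  set s := Real.sqrt (n:ℝ) with hsdef
  set w := Real.sqrt ((n:ℝ) - 1) with hwdef
  rw [← e1] at e2 ⊢
  field_simp
  linear_combination (-((s+w)^2 + s^2 - w^2 + 1) + 4*s*w + 4*s^2 + 2) * e2

private lemma aux_id1 (s c x : ℝ) (hs : s ≠ 0) (e1 : s * s = c) :
    c * x * (1 / s) = s * x := by
  rw [← e1]; field_simp

/-- `n * (log n - log (n-1)) → 1` -/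
private lemma aux_log_tendsto :
    Tendsto (fun n : ℕ => (n:ℝ) * (Real.log n - Real.log ((n : ℝ) - 1)))
      atTop (nhds 1) := by
  have h := (Real.tendsto_mul_log_one_add_div_atTop (-1)).comp
    (tendsto_natCast_atTop_atTop (R := ℝ))
  have h2 : Tendsto (fun n : ℕ => -((n:ℝ) * Real.log (1 + (-1) / n))) atTop
      (nhds (-(-1))) := h.neg
  rw [neg_neg] at h2
  refine h2.congr' ?_
  filter_upwards [eventually_ge_atTop 2] with n hn
  have hn2 : (2:ℝ) ≤ (n:ℝ) := by exact_mod_cast hn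
  have hn0 : (n:ℝ) ≠ 0 := by linarith
  have h1 : 1 + (-1) / (n:ℝ) = ((n:ℝ) - 1) / n := by field_simp; ring
  rw [h1, Real.log_div (by linarith) hn0]
  ring

/-- Taylor remainder bound for exp -/
private lemma aux_exp_remainder (x : ℝ) (hx : |x| ≤ 1) :
    |Real.exp x - 1 - x - x^2/2| ≤ |x|^3 := by
  have h := Real.exp_bound hx (n := 3) (by norm_num)
  have hsum : ∑ m ∈ Finset.range 3, x ^ m / (m.factorial : ℝ) = 1 + x + x^2/2 := by
    simp [Finset.sum_range_succ]
  rw [hsum] at h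
  have h2 : |Real.exp x - 1 - x - x^2/2| ≤ |x|^3 * ((3:ℕ).succ / ((3:ℕ).factorial * 3)) := by
    convert h using 2
    ring
    norm_num
  calc |Real.exp x - 1 - x - x^2/2| ≤ |x|^3 * ((3:ℕ).succ / ((3:ℕ).factorial * 3)) := h2
    _ ≤ |x|^3 * 1 := by
        apply mul_le_mul_of_nonneg_left (by norm_num [Nat.factorial]) (by positivity)
    _ = |x|^3 := by ring

theorem second_order_ratio_asymptotics (B μ μ₁ g : ℝ) (hB : 0 < B) (hμ : 0 < μ)
    (hμ₁ : 0 < μ₁) (b : ℕ → ℝ)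
    (hb : ∀ n : ℕ, b n = B * μ ^ n * μ₁ ^ Real.sqrt n * (n : ℝ) ^ g) :
    Tendsto (fun n : ℕ =>
        (n : ℝ) * (b n / (μ * b (n - 1)) - 1 - Real.log μ₁ / (2 * Real.sqrt n)))
      atTop (nhds (g + (Real.log μ₁) ^ 2 / 8)) := by
  set L := Real.log μ₁ with hL
  set δ : ℕ → ℝ := fun n => Real.sqrt n - Real.sqrt ((n : ℝ) - 1) with hδ
  set ℓ : ℕ → ℝ := fun n => Real.log n - Real.log ((n : ℝ) - 1) with hℓ
  set u : ℕ → ℝ := fun n => L * δ n + g * ℓ n with hu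
  have h1 : Tendsto (fun n : ℕ => (n:ℝ) * ℓ n) atTop (nhds 1) := aux_log_tendsto
  have h2 : Tendsto (fun n : ℕ => Real.sqrt n * δ n) atTop (nhds (1/2)) :=
    aux_sqrt_delta_tendsto
  have h3 : Tendsto (fun n : ℕ => (n:ℝ) * (δ n - 1 / (2 * Real.sqrt n))) atTop (nhds 0) :=
    aux_delta_err_tendsto
  have hsqinv := aux_inv_sqrt_tendsto
  -- √n * ℓ n → 0
  have hsl : Tendsto (fun n : ℕ => Real.sqrt n * ℓ n) atTop (nhds 0) := by
    have h := h1.mul hsqinv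
    rw [mul_zero] at h
    refine h.congr' ?_
    filter_upwards [eventually_ge_atTop 1] with n hn
    have e1 : Real.sqrt n * Real.sqrt n = (n:ℝ) := Real.mul_self_sqrt (by positivity)
    have hs : 0 < Real.sqrt n := Real.sqrt_pos.mpr (by exact_mod_cast Nat.pos_of_ne_zero (by omega))
    exact aux_id1 _ _ _ hs.ne' e1
  -- √n * u n → L/2
  have hsu : Tendsto (fun n : ℕ => Real.sqrt n * u n) atTop (nhds (L/2)) := by
    have h := (h2.const_mul L).add (hsl.const_mul g)
    have he : L * (1/2) + g * 0 = L/2 := by ring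
    rw [he] at h
    refine h.congr fun n => ?_
    simp only [hu]
    ring
  -- u n → 0
  have hu0 : Tendsto u atTop (nhds 0) := by
    have h := hsu.mul hsqinv
    rw [mul_zero] at h
    refine h.congr' ?_
    filter_upwards [eventually_ge_atTop 1] with n hn
    have hs : 0 < Real.sqrt n := Real.sqrt_pos.mpr (by exact_mod_cast Nat.pos_of_ne_zero (by omega))
    field_simp
  -- n * u n ^ 2 → L²/4
  have hnu2 : Tendsto (fun n : ℕ => (n:ℝ) * (u n)^2) atTop (nhds (L^2/4)) := by
    have h := hsu.mul hsu
    have he : L/2 * (L/2) = L^2/4 := by ring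
    rw [he] at h
    refine h.congr fun n => ?_
    have e1 : Real.sqrt n * Real.sqrt n = (n:ℝ) := Real.mul_self_sqrt (by positivity)
    linear_combination (u n)^2 * e1
  -- remainder term → 0
  have hrem : Tendsto (fun n : ℕ => (n:ℝ) * (Real.exp (u n) - 1 - u n - (u n)^2/2))
      atTop (nhds 0) := by
    have hbound : Tendsto (fun n : ℕ => ((n:ℝ) * (u n)^2) * |u n|) atTop (nhds 0) := by
      have h := hnu2.mul hu0.abs
      rw [abs_zero, mul_zero] at h
      exact h
    refine squeeze_zero_norm' ?_ hbound
    have hev : ∀ᶠ n : ℕ in atTop, |u n| ≤ 1 := by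
      have h := hu0.abs
      have hm : Set.Iio (1:ℝ) ∈ nhds |(0:ℝ)| := by
        rw [abs_zero]; exact Iio_mem_nhds one_pos
      filter_upwards [h hm] with n hn using le_of_lt hn
    filter_upwards [hev] with n hun
    rw [Real.norm_eq_abs, abs_mul, Nat.abs_cast]
    have h := aux_exp_remainder (u n) hun
    have h2 : (n:ℝ) * |Real.exp (u n) - 1 - u n - (u n)^2/2| ≤ (n:ℝ) * |u n|^3 :=
      mul_le_mul_of_nonneg_left h (Nat.cast_nonneg n)
    refine h2.trans (le_of_eq ?_)
    rw [← sq_abs (u n)]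
    ring
  -- ratio = exp (u n) for n ≥ 2
  have hbn : ∀ m : ℕ, 1 ≤ m →
      b m = B * Real.exp ((m:ℝ) * Real.log μ + L * Real.sqrt m + Real.log m * g) := by
    intro m hm
    have hm0 : (0:ℝ) < (m:ℝ) := by exact_mod_cast Nat.pos_of_ne_zero (by omega)
    have e1 : μ ^ m = Real.exp ((m:ℝ) * Real.log μ) := by
      rw [Real.exp_nat_mul, Real.exp_log hμ]
    have e2 : μ₁ ^ Real.sqrt m = Real.exp (L * Real.sqrt m) :=
      Real.rpow_def_of_pos hμ₁ _
    have e3 : (m:ℝ) ^ g = Real.exp (Real.log m * g) := Real.rpow_def_of_pos hm0 _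
    rw [hb m, e1, e2, e3, Real.exp_add, Real.exp_add]
    ring
  have hkey : ∀ᶠ n : ℕ in atTop, b n / (μ * b (n - 1)) = Real.exp (u n) := by
    filter_upwards [eventually_ge_atTop 2] with n hn
    have hc : ((n - 1 : ℕ) : ℝ) = (n:ℝ) - 1 := by
      have h := Nat.cast_sub (by omega : 1 ≤ n) (R := ℝ)
      simpa using h
    rw [hbn n (by omega), hbn (n-1) (by omega), hc,
      div_eq_iff (by positivity : μ * (B * Real.exp (((n:ℝ)-1) * Real.log μ
        + L * Real.sqrt ((n:ℝ)-1) + Real.log ((n:ℝ)-1) * g)) ≠ 0)]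
    have hAe : ((n:ℝ) * Real.log μ + L * Real.sqrt n + Real.log n * g)
        = u n + Real.log μ + (((n:ℝ)-1) * Real.log μ + L * Real.sqrt ((n:ℝ)-1)
          + Real.log ((n:ℝ)-1) * g) := by
      simp only [hu, hδ, hℓ]
      ring
    rw [hAe, Real.exp_add, Real.exp_add, Real.exp_log hμ]
    ring
  -- assemble
  have hfinal : Tendsto (fun n : ℕ =>
      (n:ℝ) * (Real.exp (u n) - 1 - u n - (u n)^2/2) + ((n:ℝ) * (u n)^2)/2
        + (L * ((n:ℝ) * (δ n - 1/(2 * Real.sqrt n))) + g * ((n:ℝ) * ℓ n)))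
      atTop (nhds (0 + (L^2/4)/2 + (L * 0 + g * 1))) :=
    (hrem.add (hnu2.div_const 2)).add ((h3.const_mul L).add (h1.const_mul g))
  have hval : (0 : ℝ) + (L^2/4)/2 + (L * 0 + g * 1) = g + L^2/8 := by ring
  rw [hval] at hfinal
  refine hfinal.congr' ?_
  filter_upwards [hkey] with n hn
  rw [hn]
  simp only [hu]
  ring
end
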